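/- arXiv:2111.03455 — 4 statements merged into one kernel-verified Lean document; each statement's English description precedes it below -/
import Mathlib

section
/- Let $k_\xi > 0$, $\Delta_0 > 0$, and let $\omega_x, \omega_y, \omega_z, u, g : \mathbb{R} \to \mathbb{R}$ be continuous functions with $u(t) > 0$ and $\cos(g(t)) > 0$ for all $t$. Suppose $x, y, z : \mathbb{R} \to \mathbb{R}$ are differentiable and satisfy, with $\Delta(t) = \sqrt{\Delta_0^2 + x(t)^2 + y(t)^2 + z(t)^2}$: $\dot{x} = -k_\xi \, x/\sqrt{1+x^2} + \omega_z y - \omega_y z$, $\dot{y} = -u\cos(g)\, y/\sqrt{\Delta^2+y^2} + \omega_x z - \omega_z x$, and $\dot{z} = -u\, z/\sqrt{\Delta^2+z^2} + \omega_y x - \omega_x y$. Then the function $V(t) = \tfrac{1}{2}(x(t)^2+y(t)^2+z(t)^2)$ has derivative $\dot{V}(t) = -\frac{k_\xi}{\sqrt{1+x^2}}x^2 - \frac{u\cos(g)}{\sqrt{\Delta^2+y^2}}y^2 - \frac{u}{\sqrt{\Delta^2+z^2}}z^2 \le 0$; in particular $V$ is nonincreasing. -/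
open Real

/-! The rotation terms `ω × e` of the error dynamics are orthogonal to `e = (x, y, z)`, so they
drop out of `d/dt ½‖e‖² = ⟪e, ė⟫`; what remains is `-p x² - q y² - r z²` with nonnegative gains. -/

theorem hasDerivAt_half_sq_add_sq_add_sq {x y z : ℝ → ℝ} {x' y' z' t : ℝ}
    (hx : HasDerivAt x x' t) (hy : HasDerivAt y y' t) (hz : HasDerivAt z z' t) :
    HasDerivAt (fun s => (1 / 2) * ((x s) ^ 2 + (y s) ^ 2 + (z s) ^ 2))
      (x t * x' + y t * y' + z t * z') t :=
  ((((hx.pow 2).add (hy.pow 2)).add (hz.pow 2)).const_mul (1 / 2 : ℝ)).congr_deriv (by ring)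

theorem damped_rotation_lyapunov {x y z p q r ωx ωy ωz : ℝ → ℝ}
    (hp : ∀ t, 0 ≤ p t) (hq : ∀ t, 0 ≤ q t) (hr : ∀ t, 0 ≤ r t)
    (hx : ∀ t, HasDerivAt x (-(p t * x t) + ωz t * y t - ωy t * z t) t)
    (hy : ∀ t, HasDerivAt y (-(q t * y t) + ωx t * z t - ωz t * x t) t)
    (hz : ∀ t, HasDerivAt z (-(r t * z t) + ωy t * x t - ωx t * y t) t) :
    (∀ t, HasDerivAt (fun s => (1 / 2) * ((x s) ^ 2 + (y s) ^ 2 + (z s) ^ 2))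
        (-p t * (x t) ^ 2 - q t * (y t) ^ 2 - r t * (z t) ^ 2) t
      ∧ -p t * (x t) ^ 2 - q t * (y t) ^ 2 - r t * (z t) ^ 2 ≤ 0)
    ∧ Antitone (fun s => (1 / 2) * ((x s) ^ 2 + (y s) ^ 2 + (z s) ^ 2)) := by
  have hV : ∀ t, HasDerivAt (fun s => (1 / 2) * ((x s) ^ 2 + (y s) ^ 2 + (z s) ^ 2))
      (-p t * (x t) ^ 2 - q t * (y t) ^ 2 - r t * (z t) ^ 2) t := fun t =>
    (hasDerivAt_half_sq_add_sq_add_sq (hx t) (hy t) (hz t)).congr_deriv (by ring)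
  have hV_nonpos : ∀ t, -p t * (x t) ^ 2 - q t * (y t) ^ 2 - r t * (z t) ^ 2 ≤ 0 := fun t => by
    linarith [mul_nonneg (hp t) (sq_nonneg (x t)), mul_nonneg (hq t) (sq_nonneg (y t)),
      mul_nonneg (hr t) (sq_nonneg (z t))]
  exact ⟨fun t => ⟨hV t, hV_nonpos t⟩, antitone_of_hasDerivAt_nonpos hV hV_nonpos⟩

theorem nominal_lyapunov_derivative_general
    (kξ : ℝ) (hkξ : 0 < kξ)
    (ωx ωy ωz u g : ℝ → ℝ)
    (hupos : ∀ t, 0 < u t) (hgpos : ∀ t, 0 < Real.cos (g t))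
    (x y z : ℝ → ℝ)
    (Δ : ℝ → ℝ)
    (hx : ∀ t, HasDerivAt x
      (-kξ * x t / Real.sqrt (1 + (x t) ^ 2) + ωz t * y t - ωy t * z t) t)
    (hy : ∀ t, HasDerivAt y
      (-(u t * Real.cos (g t)) * y t / Real.sqrt ((Δ t) ^ 2 + (y t) ^ 2)
        + ωx t * z t - ωz t * x t) t)
    (hz : ∀ t, HasDerivAt z
      (-(u t) * z t / Real.sqrt ((Δ t) ^ 2 + (z t) ^ 2)
        + ωy t * x t - ωx t * y t) t) :
    (∀ t, HasDerivAt (fun s => (1 / 2) * ((x s) ^ 2 + (y s) ^ 2 + (z s) ^ 2))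
        (-(kξ / Real.sqrt (1 + (x t) ^ 2)) * (x t) ^ 2
          - (u t * Real.cos (g t) / Real.sqrt ((Δ t) ^ 2 + (y t) ^ 2)) * (y t) ^ 2
          - (u t / Real.sqrt ((Δ t) ^ 2 + (z t) ^ 2)) * (z t) ^ 2) t
      ∧ (-(kξ / Real.sqrt (1 + (x t) ^ 2)) * (x t) ^ 2
          - (u t * Real.cos (g t) / Real.sqrt ((Δ t) ^ 2 + (y t) ^ 2)) * (y t) ^ 2
          - (u t / Real.sqrt ((Δ t) ^ 2 + (z t) ^ 2)) * (z t) ^ 2) ≤ 0)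
    ∧ Antitone (fun s => (1 / 2) * ((x s) ^ 2 + (y s) ^ 2 + (z s) ^ 2)) :=
  damped_rotation_lyapunov (ωx := ωx) (ωy := ωy) (ωz := ωz)
    (p := fun t => kξ / √(1 + (x t) ^ 2))
    (q := fun t => u t * cos (g t) / √((Δ t) ^ 2 + (y t) ^ 2))
    (r := fun t => u t / √((Δ t) ^ 2 + (z t) ^ 2))
    (fun _ => by positivity)
    (fun t => div_nonneg (mul_pos (hupos t) (hgpos t)).le (sqrt_nonneg _))
    (fun t => div_nonneg (hupos t).le (sqrt_nonneg _))
    (fun t => (hx t).congr_deriv (by ring))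
    (fun t => (hy t).congr_deriv (by ring))
    (fun t => (hz t).congr_deriv (by ring))

/-- Lyapunov computation for the nominal path-following error dynamics:
`V = ½(x²+y²+z²)` has the stated nonpositive derivative, so `V` is nonincreasing. -/
theorem nominal_lyapunov_derivative
    (kξ Δ0 : ℝ) (hkξ : 0 < kξ) (hΔ0 : 0 < Δ0)
    (ωx ωy ωz u g : ℝ → ℝ)
    (hωx : Continuous ωx) (hωy : Continuous ωy) (hωz : Continuous ωz)
    (hu : Continuous u) (hg : Continuous g)
    (hupos : ∀ t, 0 < u t) (hgpos : ∀ t, 0 < Real.cos (g t))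
    (x y z : ℝ → ℝ)
    (Δ : ℝ → ℝ)
    (hΔ : ∀ t, Δ t = Real.sqrt (Δ0 ^ 2 + (x t) ^ 2 + (y t) ^ 2 + (z t) ^ 2))
    (hx : ∀ t, HasDerivAt x
      (-kξ * x t / Real.sqrt (1 + (x t) ^ 2) + ωz t * y t - ωy t * z t) t)
    (hy : ∀ t, HasDerivAt y
      (-(u t * Real.cos (g t)) * y t / Real.sqrt ((Δ t) ^ 2 + (y t) ^ 2)
        + ωx t * z t - ωz t * x t) t)
    (hz : ∀ t, HasDerivAt z
      (-(u t) * z t / Real.sqrt ((Δ t) ^ 2 + (z t) ^ 2)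
        + ωy t * x t - ωx t * y t) t) :
    (∀ t, HasDerivAt (fun s => (1 / 2) * ((x s) ^ 2 + (y s) ^ 2 + (z s) ^ 2))
        (-(kξ / Real.sqrt (1 + (x t) ^ 2)) * (x t) ^ 2
          - (u t * Real.cos (g t) / Real.sqrt ((Δ t) ^ 2 + (y t) ^ 2)) * (y t) ^ 2
          - (u t / Real.sqrt ((Δ t) ^ 2 + (z t) ^ 2)) * (z t) ^ 2) t
      ∧ (-(kξ / Real.sqrt (1 + (x t) ^ 2)) * (x t) ^ 2
          - (u t * Real.cos (g t) / Real.sqrt ((Δ t) ^ 2 + (y t) ^ 2)) * (y t) ^ 2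
          - (u t / Real.sqrt ((Δ t) ^ 2 + (z t) ^ 2)) * (z t) ^ 2) ≤ 0)
    ∧ Antitone (fun s => (1 / 2) * ((x s) ^ 2 + (y s) ^ 2 + (z s) ^ 2)) :=
  nominal_lyapunov_derivative_general kξ hkξ ωx ωy ωz u g hupos hgpos x y z Δ hx hy hz
end

section
/- Let $k_\xi > 0$, $\Delta_0 > 0$, $r > 0$, $u_{\min} > 0$, $c \in (0,1]$, and let $\omega_x, \omega_y, \omega_z, u, g : \mathbb{R} \to \mathbb{R}$ be continuous with $u(t) \ge u_{\min}$ and $\cos(g(t)) \ge c$ for all $t \ge t_0$. Suppose $x, y, z : \mathbb{R} \to \mathbb{R}$ are differentiable and satisfy, with $\Delta(t) = \sqrt{\Delta_0^2 + x^2 + y^2 + z^2}$: $\dot{x} = -k_\xi x/\sqrt{1+x^2} + \omega_z y - \omega_y z$, $\dot{y} = -u\cos(g) y/\sqrt{\Delta^2+y^2} + \omega_x z - \omega_z x$, $\dot{z} = -u z/\sqrt{\Delta^2+z^2} + \omega_y x - \omega_x y$ for all $t \ge t_0$, and that $x(t_0)^2 + y(t_0)^2 + z(t_0)^2 \le r^2$.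 Then, with $q_{\min} = \min\{k_\xi/\sqrt{1+r^2},\ u_{\min}\,c/\sqrt{\Delta_0^2 + 4r^2}\}$, for all $t \ge t_0$: $\sqrt{x(t)^2+y(t)^2+z(t)^2} \le \sqrt{x(t_0)^2+y(t_0)^2+z(t_0)^2}\; e^{-q_{\min}(t-t_0)}$. -/
/-!
With `V = x² + y² + z²`, the rotation terms `ω` cancel in `V̇`, leaving a sum of three
dissipative terms, so `V` is nonincreasing and the state stays in the ball of radius `r`.
On that ball the denominators `√(1 + x²)` and `√(Δ² + y²)`, `√(Δ² + z²)` are bounded by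
`√(1 + r²)` and `√(Δ0² + 4 r²)`, which gives `V̇ ≤ -2 q_min V`; Grönwall then yields
`V(t) ≤ V(t0) e^{-2 q_min (t - t0)}`, and taking square roots gives the claim.
-/

open Real

theorem le_mul_exp_of_hasDerivAt_le_mul {f f' : ℝ → ℝ} {K a : ℝ}
    (hf : ∀ t, a ≤ t → HasDerivAt f (f' t) t) (bound : ∀ t, a ≤ t → f' t ≤ K * f t)
    {t : ℝ} (ht : a ≤ t) : f t ≤ f a * exp (K * (t - a)) := by
  have h := le_gronwallBound_of_liminf_deriv_right_le (ε := 0)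
    (fun s hs => (hf s hs.1).continuousAt.continuousWithinAt)
    (fun s hs _ hr => (hf s hs.1).hasDerivWithinAt.liminf_right_slope_le hr) le_rfl
    (fun s hs => by simpa using bound s hs.1) t ⟨ht, le_rfl⟩
  rwa [gronwallBound_ε0] at h

theorem mul_sq_le_mul_sq_div_sqrt {q a p B w : ℝ} (ha : 0 ≤ a) (hp : 0 ≤ p)
    (hB : p + w ^ 2 ≤ B) (hq : q ≤ a / √B) : q * w ^ 2 ≤ a * w ^ 2 / √(p + w ^ 2) := by
  rcases eq_or_ne w 0 with rfl | hw
  · simp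
  have hpos : 0 < √(p + w ^ 2) := sqrt_pos.2 (by positivity)
  calc q * w ^ 2 ≤ a / √(p + w ^ 2) * w ^ 2 :=
        mul_le_mul_of_nonneg_right
          (hq.trans (div_le_div_of_nonneg_left ha hpos (sqrt_le_sqrt hB))) (sq_nonneg w)
    _ = a * w ^ 2 / √(p + w ^ 2) := div_mul_eq_mul_div a _ _

theorem sqrt_le_sqrt_mul_exp {v v₀ s : ℝ} (hv : v ≤ v₀ * exp (2 * s)) :
    √v ≤ √v₀ * exp s := by
  calc √v ≤ √(v₀ * exp s ^ 2) := by rw [← exp_nat_mul]; push_cast; exact sqrt_le_sqrt hv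
    _ = √v₀ * exp s := by rw [sqrt_mul' _ (sq_nonneg _), sqrt_sq (exp_pos s).le]

theorem mul_sum_sq_le_dissipation {kξ Δ0 r a b q X Y Z Δ : ℝ} (hkξ : 0 ≤ kξ) (ha : 0 ≤ a)
    (hab : a ≤ b) (hqkξ : q ≤ kξ / √(1 + r ^ 2)) (hqa : q ≤ a / √(Δ0 ^ 2 + 4 * r ^ 2))
    (hΔ : Δ = √(Δ0 ^ 2 + X ^ 2 + Y ^ 2 + Z ^ 2)) (hball : X ^ 2 + Y ^ 2 + Z ^ 2 ≤ r ^ 2) :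
    q * (X ^ 2 + Y ^ 2 + Z ^ 2) ≤
      kξ * X ^ 2 / √(1 + X ^ 2) + a * Y ^ 2 / √(Δ ^ 2 + Y ^ 2) + b * Z ^ 2 / √(Δ ^ 2 + Z ^ 2) := by
  have hΔsq : Δ ^ 2 = Δ0 ^ 2 + X ^ 2 + Y ^ 2 + Z ^ 2 := by rw [hΔ, sq_sqrt (by positivity)]
  have hX := mul_sq_le_mul_sq_div_sqrt (w := X) hkξ zero_le_one
    (by nlinarith [sq_nonneg Y, sq_nonneg Z]) hqkξ
  have hY := mul_sq_le_mul_sq_div_sqrt (w := Y) ha (sq_nonneg Δ)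
    (by rw [hΔsq]; nlinarith [sq_nonneg X, sq_nonneg Z]) hqa
  have hZ := mul_sq_le_mul_sq_div_sqrt (w := Z) (ha.trans hab) (sq_nonneg Δ)
    (by rw [hΔsq]; nlinarith [sq_nonneg X, sq_nonneg Y])
    (hqa.trans (div_le_div_of_nonneg_right hab (sqrt_nonneg _)))
  linarith

theorem nominal_USGES_general
    (kξ Δ0 r umin c t0 : ℝ)
    (hkξ : 0 < kξ) (humin : 0 < umin)
    (hc0 : 0 < c)
    (ωx ωy ωz u g : ℝ → ℝ)
    (hub : ∀ t, t0 ≤ t → umin ≤ u t)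
    (hgb : ∀ t, t0 ≤ t → c ≤ Real.cos (g t))
    (x y z : ℝ → ℝ)
    (Δ : ℝ → ℝ)
    (hΔ : ∀ t, Δ t = Real.sqrt (Δ0 ^ 2 + (x t) ^ 2 + (y t) ^ 2 + (z t) ^ 2))
    (hx : ∀ t, t0 ≤ t → HasDerivAt x
      (-kξ * x t / Real.sqrt (1 + (x t) ^ 2) + ωz t * y t - ωy t * z t) t)
    (hy : ∀ t, t0 ≤ t → HasDerivAt y
      (-(u t * Real.cos (g t)) * y t / Real.sqrt ((Δ t) ^ 2 + (y t) ^ 2)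
        + ωx t * z t - ωz t * x t) t)
    (hz : ∀ t, t0 ≤ t → HasDerivAt z
      (-(u t) * z t / Real.sqrt ((Δ t) ^ 2 + (z t) ^ 2)
        + ωy t * x t - ωx t * y t) t)
    (hinit : (x t0) ^ 2 + (y t0) ^ 2 + (z t0) ^ 2 ≤ r ^ 2) :
    ∀ t, t0 ≤ t →
      Real.sqrt ((x t) ^ 2 + (y t) ^ 2 + (z t) ^ 2) ≤
        Real.sqrt ((x t0) ^ 2 + (y t0) ^ 2 + (z t0) ^ 2) *
          Real.exp (-(min (kξ / Real.sqrt (1 + r ^ 2))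
            (umin * c / Real.sqrt (Δ0 ^ 2 + 4 * r ^ 2))) * (t - t0)) := by
  intro t ht
  set q := min (kξ / √(1 + r ^ 2)) (umin * c / √(Δ0 ^ 2 + 4 * r ^ 2))
  set V : ℝ → ℝ := fun s => x s ^ 2 + y s ^ 2 + z s ^ 2
  set P : ℝ → ℝ := fun s => kξ * x s ^ 2 / √(1 + x s ^ 2)
    + u s * cos (g s) * y s ^ 2 / √(Δ s ^ 2 + y s ^ 2) + u s * z s ^ 2 / √(Δ s ^ 2 + z s ^ 2)
  have hu₀ (s : ℝ) (hs : t0 ≤ s) : 0 ≤ u s := humin.le.trans (hub s hs)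
  have hucos (s : ℝ) (hs : t0 ≤ s) : umin * c ≤ u s * cos (g s) :=
    mul_le_mul (hub s hs) (hgb s hs) hc0.le (hu₀ s hs)
  have hucos₀ (s : ℝ) (hs : t0 ≤ s) : 0 ≤ u s * cos (g s) :=
    (mul_pos humin hc0).le.trans (hucos s hs)
  have hV (s : ℝ) (hs : t0 ≤ s) : HasDerivAt V (-2 * P s) s :=
    ((((hx s hs).pow 2).add ((hy s hs).pow 2)).add ((hz s hs).pow 2)).congr_deriv
      (by simp only [P]; ring)
  have hP (s : ℝ) (hs : t0 ≤ s) : 0 ≤ P s := by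
    have := hu₀ s hs
    have := hucos₀ s hs
    simp only [P]
    positivity
  have hball (s : ℝ) (hs : t0 ≤ s) : V s ≤ r ^ 2 := by
    have := le_mul_exp_of_hasDerivAt_le_mul (K := 0) hV
      (fun s hs => by linarith [hP s hs]) hs
    simp only [zero_mul, exp_zero, mul_one] at this
    exact this.trans hinit
  have hdecay (s : ℝ) (hs : t0 ≤ s) : -2 * P s ≤ -2 * q * V s := by
    have := mul_sum_sq_le_dissipation hkξ.le (hucos₀ s hs)
      (mul_le_of_le_one_right (hu₀ s hs) (cos_le_one _)) (min_le_left _ _)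
      ((min_le_right _ _).trans (div_le_div_of_nonneg_right (hucos s hs) (sqrt_nonneg _)))
      (hΔ s) (hball s hs)
    linarith
  refine sqrt_le_sqrt_mul_exp ?_
  convert le_mul_exp_of_hasDerivAt_le_mul hV hdecay ht using 3
  ring

/-- USGES estimate for the nominal path-following error dynamics: solutions starting in the
ball of radius `r` decay exponentially with rate `qmin`. -/
theorem nominal_USGES
    (kξ Δ0 r umin c t0 : ℝ)
    (hkξ : 0 < kξ) (hΔ0 : 0 < Δ0) (hr : 0 < r) (humin : 0 < umin)
    (hc0 : 0 < c) (hc1 : c ≤ 1)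
    (ωx ωy ωz u g : ℝ → ℝ)
    (hωx : Continuous ωx) (hωy : Continuous ωy) (hωz : Continuous ωz)
    (hu : Continuous u) (hg : Continuous g)
    (hub : ∀ t, t0 ≤ t → umin ≤ u t)
    (hgb : ∀ t, t0 ≤ t → c ≤ Real.cos (g t))
    (x y z : ℝ → ℝ)
    (Δ : ℝ → ℝ)
    (hΔ : ∀ t, Δ t = Real.sqrt (Δ0 ^ 2 + (x t) ^ 2 + (y t) ^ 2 + (z t) ^ 2))
    (hx : ∀ t, t0 ≤ t → HasDerivAt x
      (-kξ * x t / Real.sqrt (1 + (x t) ^ 2) + ωz t * y t - ωy t * z t) t)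
    (hy : ∀ t, t0 ≤ t → HasDerivAt y
      (-(u t * Real.cos (g t)) * y t / Real.sqrt ((Δ t) ^ 2 + (y t) ^ 2)
        + ωx t * z t - ωz t * x t) t)
    (hz : ∀ t, t0 ≤ t → HasDerivAt z
      (-(u t) * z t / Real.sqrt ((Δ t) ^ 2 + (z t) ^ 2)
        + ωy t * x t - ωx t * y t) t)
    (hinit : (x t0) ^ 2 + (y t0) ^ 2 + (z t0) ^ 2 ≤ r ^ 2) :
    ∀ t, t0 ≤ t →
      Real.sqrt ((x t) ^ 2 + (y t) ^ 2 + (z t) ^ 2) ≤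
        Real.sqrt ((x t0) ^ 2 + (y t0) ^ 2 + (z t0) ^ 2) *
          Real.exp (-(min (kξ / Real.sqrt (1 + r ^ 2))
            (umin * c / Real.sqrt (Δ0 ^ 2 + 4 * r ^ 2))) * (t - t0)) :=
  nominal_USGES_general kξ Δ0 r umin c t0 hkξ humin hc0 ωx ωy ωz u g hub hgb x y z Δ hΔ hx hy hz
    hinit
end

section
/- Let $u > 0$, $u_d > 0$, and $w, \theta, \theta_p \in \mathbb{R}$. Define $U = \sqrt{u^2+w^2}$, $U_d = \sqrt{u_d^2+w^2}$, $\gamma = \theta - \arctan(w/u)$, $\alpha_d = \arctan(w/u_d)$, and $\tilde{u} = u - u_d$. Then $U \sin(\gamma - \theta_p) = U_d \sin(\theta - \alpha_d - \theta_p) + \tilde{u}\,\sin(\theta - \theta_p)$. -/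
open Real

/- With `α = arctan (w / u)` and `u > 0`, `(u, w) = √(u² + w²) (cos α, sin α)`; expanding `sin (a - α)`
turns `U sin (a - α)` into the expression `u sin a - w cos a`, which is affine in `u`. Applying this
with `a = θ - θp` at `u` and at `u_d` and subtracting leaves `(u - u_d) sin (θ - θp)`. -/

lemma sqrt_sq_add_sq_eq_mul_sqrt_one_add_div_sq {u : ℝ} (hu : 0 < u) (w : ℝ) :
    √(u ^ 2 + w ^ 2) = u * √(1 + (w / u) ^ 2) := by
  rw [← sqrt_sq hu.le, ← sqrt_mul (sq_nonneg u), sqrt_sq hu.le]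
  congr 1
  field_simp

lemma sqrt_sq_add_sq_mul_cos_arctan_div {u : ℝ} (hu : 0 < u) (w : ℝ) :
    √(u ^ 2 + w ^ 2) * cos (arctan (w / u)) = u := by
  have hpos : 0 < √(1 + (w / u) ^ 2) := sqrt_pos.2 (by positivity)
  rw [cos_arctan, sqrt_sq_add_sq_eq_mul_sqrt_one_add_div_sq hu]
  field_simp

lemma sqrt_sq_add_sq_mul_sin_arctan_div {u : ℝ} (hu : 0 < u) (w : ℝ) :
    √(u ^ 2 + w ^ 2) * sin (arctan (w / u)) = w := by
  have hpos : 0 < √(1 + (w / u) ^ 2) := sqrt_pos.2 (by positivity)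
  rw [sin_arctan, sqrt_sq_add_sq_eq_mul_sqrt_one_add_div_sq hu]
  field_simp

lemma sqrt_sq_add_sq_mul_sin_sub_arctan_div {u : ℝ} (hu : 0 < u) (w a : ℝ) :
    √(u ^ 2 + w ^ 2) * sin (a - arctan (w / u)) = u * sin a - w * cos a := by
  rw [sin_sub, mul_sub, mul_left_comm, mul_left_comm _ (cos a),
    sqrt_sq_add_sq_mul_cos_arctan_div hu, sqrt_sq_add_sq_mul_sin_arctan_div hu]
  ring

/-- Splitting of the flight-path term into the desired-surge term and a perturbation
proportional to the surge tracking error: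
`U sin(γ - θp) = U_d sin(θ - α_d - θp) + ũ sin(θ - θp)`. -/
theorem flight_path_split (u ud w θ θp : ℝ) (hu : 0 < u) (hud : 0 < ud) :
    Real.sqrt (u ^ 2 + w ^ 2) *
        Real.sin ((θ - Real.arctan (w / u)) - θp) =
      Real.sqrt (ud ^ 2 + w ^ 2) *
        Real.sin (θ - Real.arctan (w / ud) - θp) +
      (u - ud) * Real.sin (θ - θp) := by
  rw [sub_right_comm θ (arctan (w / u)), sub_right_comm θ (arctan (w / ud)),
    sqrt_sq_add_sq_mul_sin_sub_arctan_div hu,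
    sqrt_sq_add_sq_mul_sin_sub_arctan_div hud]
  ring
end

section
/- Let $k_u > 0$, $k_c > 0$, $c_u > 0$, let $\boldsymbol{\phi} : \mathbb{R} \to \mathbb{R}^3$ be continuous, and let $\tilde{u} : \mathbb{R} \to \mathbb{R}$ and $\tilde{\mathbf{V}} : \mathbb{R} \to \mathbb{R}^3$ be differentiable, satisfying the closed-loop surge error dynamics $\dot{\tilde{u}}(t) = -k_u\tilde{u}(t) - k_c\,\mathrm{sign}(\tilde{u}(t)) - \langle\boldsymbol{\phi}(t), \tilde{\mathbf{V}}(t)\rangle$ and $\dot{\tilde{\mathbf{V}}}(t) = c_u\,\boldsymbol{\phi}(t)\,\tilde{u}(t)$ (where $\mathrm{sign}(0)=0$). Then $W(t) = \tfrac{1}{2}\tilde{u}(t)^2 + \tfrac{1}{2c_u}\|\tilde{\mathbf{V}}(t)\|^2$ satisfies $\dot{W}(t) = -k_u\tilde{u}(t)^2 - k_c|\tilde{u}(t)| \le 0$; in particular $W$ is nonincreasing and $\|\tilde{\mathbf{V}}(t)\|^2 \le 2c_u W(t_0)$ for all $t \ge t_0$. -/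
open Real

/-!
Along the closed loop, `d/dt (½ũ²) = ũ·(-k_u ũ - k_c sign ũ) - ũ ⟪φ, Ṽ⟫` and
`d/dt (‖Ṽ‖² / (2c_u)) = ũ ⟪φ, Ṽ⟫`: the observer's update law is chosen so that the coupling
terms cancel, leaving `Ẇ = -k_u ũ² - k_c |ũ| ≤ 0`. Hence `W` is nonincreasing, and
`‖Ṽ(t)‖² ≤ 2 c_u W(t) ≤ 2 c_u W(t₀)`.
-/

theorem Real.self_mul_sign (r : ℝ) : r * Real.sign r = |r| := by
  rcases lt_trichotomy r 0 with h | rfl | h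
  · rw [Real.sign_of_neg h, abs_of_neg h, mul_neg_one]
  · simp
  · rw [Real.sign_of_pos h, abs_of_pos h, mul_one]

section ObserverEnergy

variable {E : Type*} [NormedAddCommGroup E]

/-- The Lyapunov function `W` of the paper, evaluated at the values `ũ`, `Ṽ` at one time. -/
noncomputable def observerEnergy (c u : ℝ) (V : E) : ℝ :=
  (1 / 2) * u ^ 2 + (1 / (2 * c)) * ‖V‖ ^ 2

theorem norm_sq_le_two_mul_observerEnergy {c : ℝ} (hc : 0 < c) (u : ℝ) (V : E) :
    ‖V‖ ^ 2 ≤ 2 * c * observerEnergy c u V := by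
  have h : 2 * c * observerEnergy c u V = c * u ^ 2 + ‖V‖ ^ 2 := by
    unfold observerEnergy
    field_simp
  rw [h]
  exact le_add_of_nonneg_left (by positivity)

theorem hasDerivAt_observerEnergy [InnerProductSpace ℝ E] {c a t : ℝ} (hc : c ≠ 0)
    {u : ℝ → ℝ} {φ V : ℝ → E}
    (hu : HasDerivAt u (a - inner ℝ (φ t) (V t)) t)
    (hV : HasDerivAt V ((c * u t) • φ t) t) :
    HasDerivAt (fun s => observerEnergy c (u s) (V s)) (u t * a) t := by
  have hu2 := (hu.pow 2).const_mul (1 / 2 : ℝ)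
  have hV2 : HasDerivAt (fun s => (1 / (2 * c)) * ‖V s‖ ^ 2)
      (u t * inner ℝ (φ t) (V t)) t := by
    have h := (hV.inner ℝ hV).const_mul (1 / (2 * c))
    simp only [real_inner_self_eq_norm_sq, real_inner_smul_left, real_inner_smul_right,
      real_inner_comm (φ t) (V t)] at h
    exact h.congr_deriv (by field_simp; ring)
  exact (hu2.add hV2).congr_deriv (by ring)

end ObserverEnergy

theorem surge_observer_lyapunov_general
    (ku kc cu : ℝ) (hku : 0 < ku) (hkc : 0 < kc) (hcu : 0 < cu)
    (φ : ℝ → EuclideanSpace ℝ (Fin 3))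
    (ut : ℝ → ℝ) (Vt : ℝ → EuclideanSpace ℝ (Fin 3))
    (hu : ∀ t, HasDerivAt ut
      (-ku * ut t - kc * Real.sign (ut t) - (inner ℝ (φ t) (Vt t) : ℝ)) t)
    (hV : ∀ t, HasDerivAt Vt ((cu * ut t) • φ t) t) :
    (∀ t, HasDerivAt (fun s => (1 / 2) * (ut s) ^ 2 + (1 / (2 * cu)) * ‖Vt s‖ ^ 2)
        (-ku * (ut t) ^ 2 - kc * |ut t|) t
      ∧ -ku * (ut t) ^ 2 - kc * |ut t| ≤ 0)
    ∧ Antitone (fun s => (1 / 2) * (ut s) ^ 2 + (1 / (2 * cu)) * ‖Vt s‖ ^ 2)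
    ∧ ∀ t0 t, t0 ≤ t →
        ‖Vt t‖ ^ 2 ≤ 2 * cu * ((1 / 2) * (ut t0) ^ 2 + (1 / (2 * cu)) * ‖Vt t0‖ ^ 2) := by
  have hW : ∀ t, HasDerivAt (fun s => observerEnergy cu (ut s) (Vt s))
      (-ku * (ut t) ^ 2 - kc * |ut t|) t := fun t =>
    (hasDerivAt_observerEnergy hcu.ne' (hu t) (hV t)).congr_deriv (by
      rw [← Real.self_mul_sign]
      ring)
  have hW_nonpos : ∀ t, -ku * (ut t) ^ 2 - kc * |ut t| ≤ 0 := fun t => by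
    nlinarith [sq_nonneg (ut t), abs_nonneg (ut t)]
  have hW_anti := antitone_of_hasDerivAt_nonpos hW hW_nonpos
  refine ⟨fun t => ⟨hW t, hW_nonpos t⟩, hW_anti, fun t0 t ht => ?_⟩
  calc ‖Vt t‖ ^ 2 ≤ 2 * cu * observerEnergy cu (ut t) (Vt t) :=
        norm_sq_le_two_mul_observerEnergy hcu _ _
    _ ≤ 2 * cu * observerEnergy cu (ut t0) (Vt t0) :=
        mul_le_mul_of_nonneg_left (hW_anti ht) (by positivity)

/-- Lyapunov analysis of the closed-loop surge error dynamics with the adaptive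
ocean-current observer: `W = ½ũ² + (1/(2c_u))‖Ṽ‖²` has derivative
`-k_u ũ² - k_c |ũ| ≤ 0`, so `W` is nonincreasing and `‖Ṽ(t)‖² ≤ 2 c_u W(t0)`. -/
theorem surge_observer_lyapunov
    (ku kc cu : ℝ) (hku : 0 < ku) (hkc : 0 < kc) (hcu : 0 < cu)
    (φ : ℝ → EuclideanSpace ℝ (Fin 3)) (hφ : Continuous φ)
    (ut : ℝ → ℝ) (Vt : ℝ → EuclideanSpace ℝ (Fin 3))
    (hu : ∀ t, HasDerivAt ut
      (-ku * ut t - kc * Real.sign (ut t) - (inner ℝ (φ t) (Vt t) : ℝ)) t)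
    (hV : ∀ t, HasDerivAt Vt ((cu * ut t) • φ t) t) :
    (∀ t, HasDerivAt (fun s => (1 / 2) * (ut s) ^ 2 + (1 / (2 * cu)) * ‖Vt s‖ ^ 2)
        (-ku * (ut t) ^ 2 - kc * |ut t|) t
      ∧ -ku * (ut t) ^ 2 - kc * |ut t| ≤ 0)
    ∧ Antitone (fun s => (1 / 2) * (ut s) ^ 2 + (1 / (2 * cu)) * ‖Vt s‖ ^ 2)
    ∧ ∀ t0 t, t0 ≤ t →
        ‖Vt t‖ ^ 2 ≤ 2 * cu * ((1 / 2) * (ut t0) ^ 2 + (1 / (2 * cu)) * ‖Vt t0‖ ^ 2) :=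
  surge_observer_lyapunov_general ku kc cu hku hkc hcu φ ut Vt hu hV
end
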